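/- arXiv:1306.1366 — 4 statements merged into one kernel-verified Lean document; each statement's English description precedes it below -/
import Mathlib

section
/- Let W be a word with Lyndon factorization W = L_1 L_2 ... L_k (each L_i a Lyndon word and L_1 ≥_lex ... ≥_lex L_k), and let u = L_r L_{r+1} ... L_s be a concatenation of consecutive Lyndon factors. Then for all positions i < j inside u, the local suffix of u starting at i is lexicographically smaller than the local suffix of u starting at j if and only if the global suffix of W starting at i is lexicographically smaller than the global suffix of W starting at j. (Compatibility of local and global suffix sorting.) -/
/-!
A nonempty suffix `s` of a Lyndon factor `L` is at least `L`, hence at least every later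
factor; an induction on the remaining factors then shows that appending `s` in front of
the rest of the factorization can only increase it. So the global suffix starting at a
factor boundary is no larger than any global suffix starting earlier.

Now compare the local suffixes `x = u[i..]` and `y = u[j..]`, with `y` shorter. If `y`
is not a prefix of `x`, the comparison is decided at a mismatch and appending the tail
`t` of `W` after `u` changes nothing. If `x = y ++ r`, then `y < x`, while globally
`y ++ t ≤ y ++ r ++ t` because `t` starts at a factor boundary after the start of `r`.
-/

/-- A Lyndon word: nonempty and strictly lexicographically smaller than
every proper cyclic rotation. -/
def IsLyndon {α : Type*} [LinearOrder α] (l : List α) : Prop :=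
  l ≠ [] ∧ ∀ u v : List α, u ≠ [] → v ≠ [] → l = u ++ v → l < v ++ u

namespace List

variable {α : Type*} [LinearOrder α]

theorem append_lt_append_of_lt_of_not_isPrefix {x y : List α} (h : x < y) (hp : ¬x <+: y)
    (a b : List α) : x ++ a < y ++ b := by
  induction h with
  | nil => exact absurd nil_prefix hp
  | rel hcd => exact Lex.rel hcd
  | cons _ ih => exact Lex.cons (ih fun hpre => hp (cons_prefix_cons.mpr ⟨rfl, hpre⟩))

theorem append_lt_append_left_iff (x : List α) {a b : List α} : x ++ a < x ++ b ↔ a < b :=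
  StrictMono.lt_iff_lt (f := (x ++ ·)) fun _ _ => append_left_lt

theorem append_le_append_left_iff (x : List α) {a b : List α} : x ++ a ≤ x ++ b ↔ a ≤ b :=
  StrictMono.le_iff_le (f := (x ++ ·)) fun _ _ => append_left_lt

theorem lt_iff_append_lt_append_of_length_lt {x y t : List α} (hlen : y.length < x.length)
    (ht : ∀ r, x = y ++ r → t ≤ r ++ t) : x < y ↔ x ++ t < y ++ t := by
  by_cases hyx : y <+: x
  · obtain ⟨r, rfl⟩ := hyx
    refine iff_of_false (List.not_lt.mpr le_append_left) ?_
    rw [append_assoc, append_lt_append_left_iff, not_lt]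
    exact ht r rfl
  · rcases lt_or_gt_of_ne (fun h : x = y => hlen.ne (h ▸ rfl)) with hxy | hyx'
    · have hxy' : ¬x <+: y := fun h => hlen.not_ge h.length_le
      exact iff_of_true hxy (append_lt_append_of_lt_of_not_isPrefix hxy hxy' t t)
    · exact iff_of_false hyx'.not_gt (append_lt_append_of_lt_of_not_isPrefix hyx' hyx t t).not_gt

end List

section Lyndon

variable {α : Type*} [LinearOrder α]

open List

theorem IsLyndon.lt_of_eq_append {L u s : List α} (hL : IsLyndon L) (hu : u ≠ []) (hs : s ≠ [])
    (h : L = u ++ s) : L < s := by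
  subst h
  by_contra! hsL
  have hlt : s < u ++ s :=
    hsL.lt_of_ne fun h => hu (by simpa using congrArg length h)
  by_cases hpre : s <+: u ++ s
  · obtain ⟨w, hw⟩ := hpre
    have hw0 : w ≠ [] := by
      rintro rfl
      exact hlt.ne (by simpa using hw)
    have hwu : w < u := by
      have := hL.2 u s hu hs rfl
      rwa [← hw, append_lt_append_left_iff] at this
    have hlen : w.length = u.length := by
      have := congrArg length hw
      simp only [length_append] at this
      omega
    have hwu' : ¬w <+: u := fun h => hwu.ne (h.eq_of_length hlen)
    exact (hL.2 s w hs hw0 hw.symm).not_gt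
      (append_lt_append_of_lt_of_not_isPrefix hwu hwu' s s)
  · have := append_lt_append_of_lt_of_not_isPrefix hlt hpre u []
    rw [append_nil] at this
    exact (hL.2 u s hu hs rfl).not_gt this

theorem IsLyndon.le_of_isSuffix {L s : List α} (hL : IsLyndon L) (hs : s ≠ []) (hsuf : s <:+ L) :
    L ≤ s := by
  obtain ⟨u, rfl⟩ := hsuf
  rcases eq_or_ne u [] with rfl | hu
  · exact le_of_eq (nil_append s)
  · exact (hL.lt_of_eq_append hu hs rfl).le

def IsLyndonFactorization (F : List (List α)) : Prop :=
  (∀ l ∈ F, IsLyndon l) ∧ F.IsChain (· ≥ ·)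

namespace IsLyndonFactorization

theorem tail {F : List (List α)} (hF : IsLyndonFactorization F) : IsLyndonFactorization F.tail :=
  ⟨fun l hl => hF.1 l (mem_of_mem_tail hl), hF.2.tail⟩

theorem isLyndon_head {L : List α} {M : List (List α)} (hF : IsLyndonFactorization (L :: M)) :
    IsLyndon L :=
  hF.1 L mem_cons_self

theorem flatten_le_append_flatten_of_isSuffix {L s : List α} {M : List (List α)}
    (hF : IsLyndonFactorization (L :: M)) (hs : s ≠ []) (hsuf : s <:+ L) :
    M.flatten ≤ s ++ M.flatten := by
  match M with
  | [] =>
    simp only [flatten_nil, append_nil]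
    -- Mathlib's `≤` on lists (`List.LE'`) is not definitionally core's, so go through `¬ s < []`
    exact _root_.not_lt.mp (not_lt_nil s)
  | L' :: M' =>
    have hF' : IsLyndonFactorization (L' :: M') := hF.tail
    have ih : M'.flatten ≤ L' ++ M'.flatten :=
      flatten_le_append_flatten_of_isSuffix hF' hF'.isLyndon_head.1 suffix_rfl
    rw [flatten_cons]
    by_cases hpre : L' <+: s
    · obtain ⟨z, hz⟩ := hpre
      rw [← hz, append_assoc]
      refine (append_le_append_left_iff L').mpr ?_
      rcases eq_or_ne z [] with rfl | hz0
      · simpa using ih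
      · have : z.length < s.length := by
          rw [← hz, length_append, Nat.lt_add_left_iff_pos, length_pos_iff]
          exact hF'.isLyndon_head.1
        exact ih.trans (flatten_le_append_flatten_of_isSuffix hF hz0 ((suffix_append L' z).trans (hz ▸ hsuf)))
    · have hL'L : L' ≤ L := (isChain_cons_cons.mp hF.2).1
      have hL's : L' < s := (hL'L.trans (hF.isLyndon_head.le_of_isSuffix hs hsuf)).lt_of_ne
        fun h => hpre (h ▸ prefix_rfl)
      exact (append_lt_append_of_lt_of_not_isPrefix hL's hpre _ _).le
termination_by (M.length, s.length)

theorem flatten_le_drop_append_flatten {B C : List (List α)} (hF : IsLyndonFactorization (B ++ C))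
    (q : ℕ) : C.flatten ≤ B.flatten.drop q ++ C.flatten := by
  induction B generalizing q with
  | nil => simp
  | cons L B ih =>
    have hF' : IsLyndonFactorization (B ++ C) := hF.tail
    rw [flatten_cons, drop_append, append_assoc]
    by_cases hq : L.length ≤ q
    · rw [drop_eq_nil_of_le hq, nil_append]
      exact ih hF' _
    · rw [Nat.sub_eq_zero_of_le (by omega), drop_zero]
      have hs : L.drop q ≠ [] := by simpa using hq
      have hB : C.flatten ≤ B.flatten ++ C.flatten := by simpa using ih hF' 0
      have hL := flatten_le_append_flatten_of_isSuffix (M := B ++ C) hF hs (drop_suffix q L)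
      rw [flatten_append] at hL
      exact hB.trans hL

end IsLyndonFactorization

end Lyndon

theorem local_global_suffix_compatible_general {α : Type*} [LinearOrder α]
    (A B C : List (List α))
    (hLy : ∀ l ∈ A ++ B ++ C, IsLyndon l)
    (hchain : (A ++ B ++ C).Chain' (· ≥ ·))
    (i j : ℕ) (hij : i < j)
    (hj : j < A.flatten.length + B.flatten.length) :
    (A.flatten ++ B.flatten).drop i < (A.flatten ++ B.flatten).drop j ↔
      (A ++ B ++ C).flatten.drop i < (A ++ B ++ C).flatten.drop j := by
  set P := A.flatten ++ B.flatten
  have hP : P.length = A.flatten.length + B.flatten.length := List.length_append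
  have hW : (A ++ B ++ C).flatten = P ++ C.flatten := by simp [P]
  have hdrop (k : ℕ) (hk : k ≤ P.length) : (P ++ C.flatten).drop k = P.drop k ++ C.flatten :=
    List.drop_append_of_le_length hk
  rw [hW, hdrop i (by omega), hdrop j (by omega)]
  refine List.lt_iff_append_lt_append_of_length_lt (by simp only [List.length_drop]; omega)
    fun r hr => ?_
  have hr' : r = P.drop (i + (P.length - j)) := by
    rw [← List.drop_drop, hr, ← List.length_drop, List.drop_left]
  have hboundary := IsLyndonFactorization.flatten_le_drop_append_flatten (B := A ++ B)
    ⟨hLy, hchain⟩ (i + (P.length - j))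
  rwa [List.flatten_append, ← hr'] at hboundary

/-- Compatibility of local and global suffix sorting: if
`W = (A ++ B ++ C).flatten` is the Lyndon factorization of `W` and
`u = B.flatten` is a concatenation of consecutive Lyndon factors, then for
positions `i < j` inside `u`, the local suffixes (suffixes of the prefix
`A.flatten ++ B.flatten` of `W`) compare the same way as the global suffixes. -/
theorem local_global_suffix_compatible {α : Type*} [LinearOrder α]
    (A B C : List (List α))
    (hLy : ∀ l ∈ A ++ B ++ C, IsLyndon l)
    (hchain : (A ++ B ++ C).Chain' (· ≥ ·))
    (i j : ℕ) (hij : i < j)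
    (hi : A.flatten.length ≤ i) (hj : j < A.flatten.length + B.flatten.length) :
    (A.flatten ++ B.flatten).drop i < (A.flatten ++ B.flatten).drop j ↔
      (A ++ B ++ C).flatten.drop i < (A ++ B ++ C).flatten.drop j :=
  local_global_suffix_compatible_general A B C hLy hchain i j hij hj
end

section
/- Let L_m be a Lyndon word appearing as a factor of W, and let z be a nonempty proper suffix of L_m. Then z >_lex L_m; consequently, for any words x and any non-increasing sequence of Lyndon words L_m ≥_lex L_{s+1} ≥_lex ... ≥_lex L_k, the word x z L_{m+1} ... L_k is lexicographically greater than x L_{s+1} ... L_k whenever m ≤ s. (The key comparison step in the proof of the compatibility theorem.) -/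
namespace List

variable {α : Type*} [LinearOrder α]

/-- `s` is smaller than `t` at the first position where they differ (neither is a prefix of the
other). -/
def LtAtMismatch (s t : List α) : Prop :=
  ∀ u v : List α, s ++ u < t ++ v

theorem LtAtMismatch.cons {s t : List α} (h : LtAtMismatch s t) (a : α) :
    LtAtMismatch (a :: s) (a :: t) :=
  fun u v => append_left_lt (l₁ := [a]) (h u v)

theorem isPrefix_or_ltAtMismatch_of_lt {s t : List α} (h : s < t) :
    s <+: t ∨ LtAtMismatch s t := by
  induction h with
  | nil => exact Or.inl nil_prefix
  | @cons a l₁ l₂ _ ih =>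
    rcases ih with hpre | hmis
    · exact Or.inl (cons_prefix_cons.mpr ⟨rfl, hpre⟩)
    · exact Or.inr (hmis.cons a)
  | rel hab => exact Or.inr fun _ _ => Lex.rel hab

theorem ltAtMismatch_of_lt_of_length_le {s t : List α} (h : s < t)
    (hlen : t.length ≤ s.length) : LtAtMismatch s t := by
  refine (isPrefix_or_ltAtMismatch_of_lt h).resolve_left fun hpre => ?_
  exact (hpre.eq_of_length (le_antisymm hpre.length_le hlen) ▸ h).false

theorem lt_of_append_lt_append_left {p s t : List α} (h : p ++ s < p ++ t) : s < t := by
  induction p with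
  | nil => exact h
  | cons a p ih => exact ih ((cons_lt_cons_iff.mp h).resolve_left (lt_irrefl a)).2

end List

section

open List

variable {α : Type*} [LinearOrder α]

theorem IsLyndon.lt_of_eq_append_s7 {L y z : List α} (hL : IsLyndon L) (hy : y ≠ [])
    (hz : z ≠ []) (hsplit : L = y ++ z) : L < z := by
  have hrot : L < z ++ y := hL.2 y z hy hz hsplit
  have hlen : z.length < L.length := by
    subst hsplit
    simpa using length_pos_iff.mpr hy
  refine lt_of_not_ge fun hle => ?_
  have hzL : z < L := hle.lt_of_ne (by rintro rfl; exact hlen.false)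
  rcases isPrefix_or_ltAtMismatch_of_lt hzL with ⟨t, ht⟩ | hmis
  · have htne : t ≠ [] := by
      rintro rfl
      simp [← ht] at hlen
    have hty : t < y := lt_of_append_lt_append_left (p := z) (ht ▸ hrot)
    have hlen' : y.length ≤ t.length := by
      have := congrArg length (hsplit.symm.trans ht.symm)
      simp only [length_append] at this
      omega
    have hless : t ++ z < L := hsplit ▸ ltAtMismatch_of_lt_of_length_le hty hlen' z z
    exact lt_asymm hless (hL.2 z t hz htne ht.symm)
  · exact lt_asymm hrot (by simpa using hmis y [])

theorem IsLyndon.flatten_lt_of_eq_append {L : List α} (hL : IsLyndon L)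
    {T : List (List α)} (hT : ∀ t ∈ T, t ≤ L) {y z : List α} (hy : y ≠ []) (hz : z ≠ [])
    (hsplit : L = y ++ z) (w : List α) : T.flatten < z ++ w := by
  induction T generalizing y z with
  | nil =>
    obtain ⟨a, z, rfl⟩ := exists_cons_of_ne_nil hz
    exact nil_lt_cons a _
  | cons t T ih =>
    have htz : t < z := (hT t mem_cons_self).trans_lt (hL.lt_of_eq_append_s7 hy hz hsplit)
    rw [flatten_cons]
    rcases isPrefix_or_ltAtMismatch_of_lt htz with ⟨z', rfl⟩ | hmis
    · have hz' : z' ≠ [] := by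
        rintro rfl
        simp at htz
      have hrest : T.flatten < z' ++ w :=
        ih (fun s hs => hT s (mem_cons_of_mem t hs)) (y := y ++ t) (by simp [hy]) hz'
          (by simp [hsplit])
      simpa using append_left_lt (l₁ := t) hrest
    · exact hmis _ _

end

/-- Key comparison step: a nonempty proper suffix `z` of a Lyndon word `L`
satisfies `z > L`; consequently, for any word `x` and any non-increasing
sequence of Lyndon words headed by `L` (so that `S`, a suffix of `M`,
plays the role of `L_{s+1} ⋯ L_k` and `M` the role of `L_{m+1} ⋯ L_k`),
we have `x ++ S.flatten < x ++ z ++ M.flatten`. -/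
theorem lyndon_suffix_comparison {α : Type*} [LinearOrder α]
    (L y z : List α) (hL : IsLyndon L)
    (hy : y ≠ []) (hz : z ≠ []) (hsplit : L = y ++ z) :
    L < z ∧
    ∀ (x : List α) (M S : List (List α)),
      (∀ l ∈ M, IsLyndon l) → S <:+ M →
      (L :: M).Chain' (· ≥ ·) →
      x ++ S.flatten < x ++ z ++ M.flatten := by
  refine ⟨hL.lt_of_eq_append_s7 hy hz hsplit, fun x M S _ hSM hchain => ?_⟩
  have hM : ∀ t ∈ M, t ≤ L := (List.pairwise_cons.mp (List.isChain_iff_pairwise.mp hchain)).1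
  rw [List.append_assoc]
  exact List.append_left_lt
    (hL.flatten_lt_of_eq_append (fun t ht => hM t (hSM.subset ht)) hy hz hsplit M.flatten)
end

section
/- Let two suffixes of W start at positions i < j, both inside u = L_r...L_s (consecutive Lyndon factors of the Lyndon factorization of W). If the local suffix suf_u(j) is a prefix of the local suffix suf_u(i), then the global suffix suf_W(i) is strictly lexicographically greater than the global suffix suf_W(j). -/
namespace List

variable {α : Type*} [LinearOrder α]

theorem append_lt_append_of_lt_of_not_prefix :
    ∀ {x y : List α}, x < y → ¬ x <+: y → ∀ a b, x ++ a < y ++ b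
  | [], _, _, hp, _, _ => absurd nil_prefix hp
  | _ :: _, _ :: _, .rel h, _, _, _ => .rel h
  | _ :: _, _ :: _, .cons h, hp, a, b =>
      .cons (append_lt_append_of_lt_of_not_prefix h
        (fun hxy => hp (cons_prefix_cons.mpr ⟨rfl, hxy⟩)) a b)

theorem lt_of_lt_append_of_not_prefix {x y w : List α} (h : x < y ++ w) (hp : ¬ y <+: x) :
    x < y := by
  by_contra! hyx
  rcases hyx.lt_or_eq with hlt | rfl
  · have := append_lt_append_of_lt_of_not_prefix hlt hp w []
    rw [append_nil] at this
    exact lt_asymm h this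
  · exact hp (prefix_refl y)

theorem lt_of_append_lt_append_left_s8 {c x y : List α} (h : c ++ x < c ++ y) : x < y :=
  (StrictMono.lt_iff_lt (f := (c ++ ·)) fun _ _ => append_left_lt).mp h

end List

namespace IsLyndon

open List

variable {α : Type*} [LinearOrder α] {N : List α}

theorem append_lt_append_of_proper_suffix (hN : IsLyndon N) {M R : List α} (hMR : N = M ++ R)
    (hM : M ≠ []) (hR : R ≠ []) (a b : List α) : N ++ a < R ++ b := by
  have hrot : N < R ++ M := hN.2 M R hM hR hMR
  have hlen : R.length < N.length := by
    simp [hMR, length_pos_iff.mpr hM]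
  refine append_lt_append_of_lt_of_not_prefix ?_ (fun h => h.length_le.not_gt hlen) a b
  by_cases hRN : R <+: N
  · exfalso
    obtain ⟨S, hS⟩ := hRN
    have hS' : S ≠ [] := by rintro rfl; simp [← hS] at hlen
    have hSlen : S.length = M.length := by
      have := congrArg length (hS.trans hMR); simp at this; omega
    have hSM : S < M := lt_of_append_lt_append_left_s8 (c := R) (hS ▸ hrot)
    have hSRN : S ++ R < N := hMR ▸ append_lt_append_of_lt_of_not_prefix hSM
      (fun h => hSM.ne (h.eq_of_length hSlen)) R R
    exact lt_asymm hSRN (hN.2 R S hR hS' hS.symm)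
  · exact lt_of_lt_append_of_not_prefix hrot hRN

theorem append_le_append_of_suffix (hN : IsLyndon N) {v : List α} (hv : v <:+ N)
    (hv' : v ≠ []) (T : List α) : N ++ T ≤ v ++ T := by
  obtain ⟨M, rfl⟩ := hv
  rcases eq_or_ne M [] with rfl | hM
  · rfl
  · exact (hN.append_lt_append_of_proper_suffix rfl hM hv' T T).le

theorem flatten_lt_append_flatten (hN : IsLyndon N) :
    ∀ {L : List (List α)}, (∀ X ∈ L, X ≤ N) → L.flatten < N ++ L.flatten
  | [], _ => by
    obtain ⟨a, l, rfl⟩ := exists_cons_of_ne_nil hN.1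
    simp
  | M :: L, hle => by
    have ih := hN.flatten_lt_append_flatten fun X hX => hle X (mem_cons_of_mem M hX)
    rw [flatten_cons]
    by_cases hp : M <+: N
    · obtain ⟨R, rfl⟩ := hp
      rcases eq_or_ne M [] with rfl | hM
      · simpa using ih
      rcases eq_or_ne R [] with rfl | hR
      · simpa using append_left_lt (l₁ := M) ih
      have := hN.append_lt_append_of_proper_suffix rfl hM hR L.flatten (M ++ L.flatten)
      simpa using append_left_lt (l₁ := M) (ih.trans this)
    · have hne : M ≠ N := fun h => hp (h ▸ prefix_refl M)
      exact append_lt_append_of_lt_of_not_prefix ((hle M mem_cons_self).lt_of_ne hne) hp _ _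

end IsLyndon

theorem flatten_lt_append_flatten_of_suffix {α : Type*} [LinearOrder α] :
    ∀ {L C : List (List α)}, (∀ l ∈ L ++ C, IsLyndon l) → (L ++ C).Pairwise (· ≥ ·) →
      ∀ {t : List α}, t <:+ L.flatten → t ≠ [] → C.flatten < t ++ C.flatten
  | [], _, _, _, _, ht, ht' => absurd (List.suffix_nil.mp ht) ht'
  | M :: L, C, hLy, hpw, t, ht, ht' => by
    rw [List.cons_append, List.pairwise_cons] at hpw
    have hLy' : ∀ l ∈ L ++ C, IsLyndon l := fun l hl => hLy l (List.mem_cons_of_mem M hl)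
    have ih : ∀ {t : List α}, t <:+ L.flatten → t ≠ [] → C.flatten < t ++ C.flatten :=
      flatten_lt_append_flatten_of_suffix hLy' hpw.2
    obtain ⟨s, hs⟩ := ht
    rcases List.append_eq_append_iff.mp (hs.trans List.flatten_cons) with
      ⟨v, rfl, rfl⟩ | ⟨c, rfl, hF⟩
    · rcases eq_or_ne v [] with rfl | hv
      · exact ih (List.suffix_refl _) (by simpa using ht')
      have hMly : IsLyndon (s ++ v) := hLy _ List.mem_cons_self
      calc C.flatten ≤ L.flatten ++ C.flatten := by
            rcases eq_or_ne L.flatten [] with hF | hF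
            · simp [hF]
            · exact (ih (List.suffix_refl _) hF).le
        _ < (s ++ v) ++ (L.flatten ++ C.flatten) := by
          rw [← List.flatten_append]
          exact hMly.flatten_lt_append_flatten hpw.1
        _ ≤ v ++ (L.flatten ++ C.flatten) :=
          hMly.append_le_append_of_suffix (List.suffix_append s v) hv _
        _ = _ := (List.append_assoc _ _ _).symm
    · exact ih ⟨c, hF.symm⟩ ht'

theorem global_gt_of_local_prefix_general {α : Type*} [LinearOrder α]
    (A B C : List (List α))
    (hLy : ∀ l ∈ A ++ B ++ C, IsLyndon l)
    (hchain : (A ++ B ++ C).Chain' (· ≥ ·))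
    (i j : ℕ) (hij : i < j)
    (hj : j < A.flatten.length + B.flatten.length)
    (hpre : (A.flatten ++ B.flatten).drop j <+: (A.flatten ++ B.flatten).drop i) :
    (A ++ B ++ C).flatten.drop j < (A ++ B ++ C).flatten.drop i := by
  set P := (A ++ B).flatten
  have hjP : j ≤ P.length := by
    simp only [P, List.flatten_append, List.length_append]; omega
  obtain ⟨t, ht⟩ : P.drop j <+: P.drop i := by simpa [P] using hpre
  have htP : t <:+ P := (ht ▸ List.suffix_append _ t).trans (List.drop_suffix i P)
  have ht' : t ≠ [] := by
    rintro rfl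
    have := congrArg List.length ht
    simp at this; omega
  have hkey :=
    flatten_lt_append_flatten_of_suffix hLy (List.isChain_iff_pairwise.mp hchain) htP ht'
  rw [List.flatten_append, List.drop_append_of_le_length hjP,
    List.drop_append_of_le_length (hij.le.trans hjP), ← ht, List.append_assoc]
  exact List.append_left_lt hkey

/-- If the local suffix at `j` is a prefix of the local suffix at `i`
(positions `i < j` inside a block of consecutive Lyndon factors), then the
global suffix at `i` is strictly greater than the global suffix at `j`. -/
theorem global_gt_of_local_prefix {α : Type*} [LinearOrder α]
    (A B C : List (List α))
    (hLy : ∀ l ∈ A ++ B ++ C, IsLyndon l)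
    (hchain : (A ++ B ++ C).Chain' (· ≥ ·))
    (i j : ℕ) (hij : i < j)
    (hi : A.flatten.length ≤ i) (hj : j < A.flatten.length + B.flatten.length)
    (hpre : (A.flatten ++ B.flatten).drop j <+: (A.flatten ++ B.flatten).drop i) :
    (A ++ B ++ C).flatten.drop j < (A ++ B ++ C).flatten.drop i :=
  global_gt_of_local_prefix_general A B C hLy hchain i j hij hj hpre
end

section
/- In the Lyndon factorization W = L_1 L_2 ... L_k, the last factor L_k is the lexicographically smallest nonempty suffix of W. -/
namespace List

variable {α : Type*} [LinearOrder α]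

-- Core's `List.le_append_left` is about core's `≤` on lists, not the one of this linear order.
theorem le_self_append (l m : List α) : l ≤ l ++ m :=
  not_lt.mp le_append_left

theorem lt_of_append_lt_append_left_s12 {l a b : List α} (h : l ++ a < l ++ b) : a < b := by
  by_contra! hba
  rcases hba.lt_or_eq with hlt | rfl
  · exact lt_asymm h (append_left_lt hlt)
  · exact lt_irrefl _ h

theorem isPrefix_or_forall_append_lt_append_of_lt {a b : List α} (h : a < b) :
    a <+: b ∨ ∀ c d : List α, a ++ c < b ++ d := by
  induction h with
  | nil => exact Or.inl nil_prefix
  | cons _ ih =>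
    rcases ih with ⟨t, rfl⟩ | hall
    · exact Or.inl ⟨t, rfl⟩
    · exact Or.inr fun c d => Lex.cons (hall c d)
  | rel hr => exact Or.inr fun c d => Lex.rel hr

theorem append_lt_append_of_lt_of_length_eq {a b : List α} (h : a < b)
    (hlen : a.length = b.length) (c d : List α) : a ++ c < b ++ d := by
  rcases isPrefix_or_forall_append_lt_append_of_lt h with hpre | hall
  · exact absurd h (hpre.eq_of_length hlen).ge.not_gt
  · exact hall c d

end List

namespace IsLyndon

variable {α : Type*} [LinearOrder α]

/- If `v ≤ u ++ v`, then `v` is a prefix, `u ++ v = v ++ w` (otherwise already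
`v ++ u < u ++ v`, against the rotation `v ++ u`); that rotation then gives `w < u`, and the
rotation `w ++ v` undercuts `u ++ v`. -/
theorem lt_of_eq_append_s12 {l u v : List α} (hl : IsLyndon l) (hu : u ≠ []) (hv : v ≠ [])
    (h : l = u ++ v) : l < v := by
  subst h
  have hrot : u ++ v < v ++ u := hl.2 u v hu hv rfl
  by_contra! hvl
  have hlt : v < u ++ v := hvl.lt_of_ne fun heq => hu <| by
    simpa using congrArg List.length heq
  rcases List.isPrefix_or_forall_append_lt_append_of_lt hlt with ⟨w, hw⟩ | hall
  · have hlen : w.length = u.length := by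
      have := congrArg List.length hw
      simp only [List.length_append] at this
      omega
    have hw0 : w ≠ [] := fun h0 => hu (List.length_eq_zero_iff.mp (by simp [← hlen, h0]))
    have hwu : w < u := List.lt_of_append_lt_append_left_s12 (hw ▸ hrot)
    have hrot' : u ++ v < w ++ v := hl.2 v w hv hw0 hw.symm
    exact lt_asymm hrot' (List.append_lt_append_of_lt_of_length_eq hwu hlen v v)
  · exact lt_asymm hrot (by simpa using hall u [])

theorem le_drop {l : List α} (hl : IsLyndon l) {i : ℕ} (hi : i < l.length) : l ≤ l.drop i := by
  rcases Nat.eq_zero_or_pos i with rfl | hi0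
  · simp
  · refine (hl.lt_of_eq_append_s12 (u := l.take i) ?_ ?_ (List.take_append_drop i l).symm).le
    · simpa using ⟨hi0.ne', hl.1⟩
    · simpa using hi

end IsLyndon

theorem le_drop_flatten_of_forall_isLyndon {α : Type*} [LinearOrder α] {M : List α}
    {F : List (List α)} (hLy : ∀ l ∈ F, IsLyndon l) (hM : ∀ l ∈ F, M ≤ l) {i : ℕ}
    (hi : i < F.flatten.length) : M ≤ F.flatten.drop i := by
  induction F generalizing i with
  | nil => simp at hi
  | cons L F ih =>
    rw [List.flatten_cons, List.drop_append]
    rcases lt_or_ge i L.length with hiL | hiL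
    · calc M ≤ L := hM L (by simp)
        _ ≤ L.drop i := (hLy L (by simp)).le_drop hiL
        _ ≤ _ := List.le_self_append _ _
    · rw [List.drop_eq_nil_of_le hiL, List.nil_append]
      refine ih (fun l hl => hLy l (by simp [hl])) (fun l hl => hM l (by simp [hl])) ?_
      simp only [List.flatten_cons, List.length_append] at hi
      omega

/-- In the Lyndon factorization `W = L_1 ⋯ L_k`, the last factor `L_k` is
the lexicographically smallest nonempty suffix of `W`. -/
theorem last_lyndon_factor_min_suffix {α : Type*} [LinearOrder α]
    (F : List (List α)) (hF : F ≠ [])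
    (hLy : ∀ l ∈ F, IsLyndon l) (hchain : F.Chain' (· ≥ ·)) :
    F.getLast hF <:+ F.flatten ∧
      ∀ i, i < F.flatten.length → F.getLast hF ≤ F.flatten.drop i := by
  have hsplit : F.flatten = F.dropLast.flatten ++ F.getLast hF := by
    conv_lhs => rw [← List.dropLast_append_getLast hF]
    simp
  have hlast_le : ∀ l ∈ F, F.getLast hF ≤ l :=
    hchain.backwards_induction _ _ (fun _ _ hxy hy => hy.trans hxy) fun _ => le_rfl
  exact ⟨hsplit ▸ List.suffix_append _ _,
    fun _ hi => le_drop_flatten_of_forall_isLyndon hLy hlast_le hi⟩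
end
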